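/- The set M(ε) = {[[α,β],[εβ,α]] : (α,β) ∈ F_q² \ {(0,0)}} is a subgroup of GL_2(F_q), and the map M ↦ ρ(M) is an injective group homomorphism from M(ε) to the automorphism group Aut(G) of G; in particular each ρ(M) is a group automorphism of G. -/
import Mathlib


/-- The Heisenberg group `H₃(F)` of upper unitriangular 3×3 matrices over `F`,
recorded by the three free entries: `x` in position (1,2), `y` in position (2,3),
`z` in position (1,3). -/
@[ext]
structure Heis (F : Type*) where
  x : F
  y : F
  z : F
deriving DecidableEq

namespace Heis

variable {F : Type*} [Field F]

/-- Multiplication corresponding to the matrix product. -/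
instance : Group (Heis F) where
  mul a b := ⟨a.x + b.x, a.y + b.y, a.z + b.z + a.x * b.y⟩
  one := ⟨0, 0, 0⟩
  inv a := ⟨-a.x, -a.y, -a.z + a.x * a.y⟩
  mul_assoc a b c := Heis.ext
    (show a.x + b.x + c.x = a.x + (b.x + c.x) by ring)
    (show a.y + b.y + c.y = a.y + (b.y + c.y) by ring)
    (show a.z + b.z + a.x * b.y + c.z + (a.x + b.x) * c.y
        = a.z + (b.z + c.z + b.x * c.y) + a.x * (b.y + c.y) by ring)
  one_mul a := Heis.ext
    (show (0 : F) + a.x = a.x by ring)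
    (show (0 : F) + a.y = a.y by ring)
    (show (0 : F) + a.z + 0 * a.y = a.z by ring)
  mul_one a := Heis.ext
    (show a.x + 0 = a.x by ring)
    (show a.y + 0 = a.y by ring)
    (show a.z + 0 + a.x * 0 = a.z by ring)
  inv_mul_cancel a := Heis.ext
    (show -a.x + a.x = 0 by ring)
    (show -a.y + a.y = 0 by ring)
    (show -a.z + a.x * a.y + a.z + -a.x * a.y = 0 by ring)

instance [Fintype F] : Fintype (Heis F) :=
  Fintype.ofEquiv (F × F × F)
    ⟨fun p => ⟨p.1, p.2.1, p.2.2⟩, fun a => (a.x, a.y, a.z), fun _ => rfl, fun _ => rfl⟩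

end Heis

/-- The element `g(x,y,z)` of the Heisenberg group. -/
def gElt {F : Type*} (x y z : F) : Heis F := ⟨x, y, z⟩

/-- The center `Z = {g(0,0,z) : z ∈ F}` of the Heisenberg group, as a set. -/
def Zset (F : Type*) [Field F] : Set (Heis F) := {g : Heis F | g.x = 0 ∧ g.y = 0}

/-- The center `Z` as a subgroup of the Heisenberg group. -/
def Zsub (F : Type*) [Field F] : Subgroup (Heis F) where
  carrier := Zset F
  mul_mem' := fun {a b} ha hb =>
    ⟨show a.x + b.x = 0 by rw [ha.1, hb.1, add_zero],
     show a.y + b.y = 0 by rw [ha.2, hb.2, add_zero]⟩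
  one_mem' := ⟨rfl, rfl⟩
  inv_mem' := fun {a} ha =>
    ⟨show -a.x = 0 by rw [ha.1, neg_zero],
     show -a.y = 0 by rw [ha.2, neg_zero]⟩

/-- `γ_i(α,β) = αβ/2 + (α² − εβ²)i`. -/
def gam {F : Type*} [Field F] (ε i α β : F) : F := α * β / 2 + (α ^ 2 - ε * β ^ 2) * i

/-- `Y_i = {g(α, β, γ_i(α,β)) : (α,β) ≠ (0,0)}`. -/
def Yset {F : Type*} [Field F] (ε i : F) : Set (Heis F) :=
  {g : Heis F | ∃ α β : F, (α, β) ≠ (0, 0) ∧ g = gElt α β (gam ε i α β)}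

/-- `X_i = Y_i ∪ {e}`. -/
def Xset {F : Type*} [Field F] (ε i : F) : Set (Heis F) := Yset ε i ∪ {1}

/-- The map `ρ(M) : G → G` attached to the matrix `M = [[α,β],[εβ,α]]`. -/
def rho {F : Type*} [Field F] (ε α β : F) : Heis F → Heis F := fun g =>
  gElt (α * g.x + ε * β * g.y) (β * g.x + α * g.y)
    (α * β * (g.x ^ 2 / 2 + ε * g.y ^ 2 / 2) + ε * β ^ 2 * g.x * g.y
      + (α ^ 2 - ε * β ^ 2) * g.z)

/-- `K = {ρ(M) : M = [[α,β],[εβ,α]], (α,β) ≠ (0,0)}`, as a set of maps `G → G`. -/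
def Kset {F : Type*} [Field F] (ε : F) : Set (Heis F → Heis F) :=
  {f | ∃ α β : F, (α, β) ≠ (0, 0) ∧ f = rho ε α β}

/-- The family of sets `{e}`, `Z \ {e}`, `Y_i` for `i ∈ F`. -/
def SFam {F : Type*} [Field F] (ε : F) : Set (Set (Heis F)) :=
  insert {1} (insert (Zset F \ {1}) {S | ∃ i : F, S = Yset ε i})

/-- `f` preserves each of the basic sets `{e}`, `Z \ {e}`, `Y_i`:
`hg⁻¹ ∈ S ↔ f(h)f(g)⁻¹ ∈ S`. -/
def Preserves {F : Type*} [Field F] (ε : F) (f : Heis F → Heis F) : Prop :=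
  ∀ S ∈ SFam ε, ∀ g h : Heis F, h * g⁻¹ ∈ S ↔ f h * (f g)⁻¹ ∈ S

/-- The set of permutations of `G` of the form `x ↦ σ(x)·c` with `σ ∈ K`, `c ∈ G`. -/
def Aset {F : Type*} [Field F] (ε : F) : Set (Equiv.Perm (Heis F)) :=
  {f | ∃ σ ∈ Kset ε, ∃ c : Heis F, ∀ x : Heis F, f x = σ x * c}

/-- The operation `ψ` on `F ∪ {∞}`, with `∞` encoded as `none`. -/
def psi {F : Type*} [Field F] [DecidableEq F] (ε : F) : Option F → Option F → Option F
  | none, j => j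
  | some i, none => some i
  | some i, some j => if i + j = 0 then none else some ((i * j + ε / 16) / (i + j))

/-- `Y_k` for `k ∈ F ∪ {∞}`, where `Y_∞ = Z \ {e}`. -/
def YInf {F : Type*} [Field F] (ε : F) : Option F → Set (Heis F)
  | some i => Yset ε i
  | none => Zset F \ {1}


namespace S0

variable {F : Type*} [Field F]

lemma mul_def (a b : Heis F) : a * b = ⟨a.x + b.x, a.y + b.y, a.z + b.z + a.x * b.y⟩ := rfl

lemma rho_map_mul (h2 : (2:F) ≠ 0) (ε α β : F) (g h : Heis F) :
    rho ε α β (g * h) = rho ε α β g * rho ε α β h := by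
  simp only [mul_def, rho, gElt]
  refine Heis.ext (by ring) (by ring) ?_
  field_simp
  ring

lemma rho_comp (h2 : (2:F) ≠ 0) (ε α β α' β' : F) (g : Heis F) :
    rho ε α β (rho ε α' β' g) = rho ε (α*α' + ε*β*β') (α*β' + β*α') g := by
  simp only [rho, gElt]
  refine Heis.ext (by ring) (by ring) ?_
  field_simp
  ring

lemma rho_one (ε : F) (g : Heis F) : rho ε 1 0 g = g := by
  simp only [rho, gElt]
  refine Heis.ext (by ring) (by ring) (by ring)

variable (ε : F)

def Hsub : Subgroup (GL (Fin 2) F) where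
  carrier := {u | ((u : Matrix (Fin 2) (Fin 2) F)) 1 0 = ε * (u : Matrix (Fin 2) (Fin 2) F) 0 1
    ∧ ((u : Matrix (Fin 2) (Fin 2) F)) 1 1 = (u : Matrix (Fin 2) (Fin 2) F) 0 0}
  mul_mem' := by
    rintro a b ⟨ha1, ha2⟩ ⟨hb1, hb2⟩
    constructor <;>
      simp [Units.val_mul, Matrix.mul_apply, Fin.sum_univ_two, ha1, ha2, hb1, hb2] <;> ring
  one_mem' := by constructor <;> simp [Matrix.one_apply]
  inv_mem' := by
    rintro a ⟨ha1, ha2⟩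
    constructor <;>
      simp [Matrix.coe_units_inv, Matrix.inv_def, Matrix.adjugate_fin_two,
        Matrix.smul_apply, ha1, ha2] <;> ring

variable {ε} in
lemma mem_Hsub {u : GL (Fin 2) F} (hu : u ∈ Hsub ε) :
    ((u : Matrix (Fin 2) (Fin 2) F)) 1 0 = ε * (u : Matrix (Fin 2) (Fin 2) F) 0 1
    ∧ ((u : Matrix (Fin 2) (Fin 2) F)) 1 1 = (u : Matrix (Fin 2) (Fin 2) F) 0 0 := hu

def a (u : Hsub ε) : F := ((u : GL (Fin 2) F) : Matrix (Fin 2) (Fin 2) F) 0 0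
def b (u : Hsub ε) : F := ((u : GL (Fin 2) F) : Matrix (Fin 2) (Fin 2) F) 0 1

lemma a_one : a ε (1 : Hsub ε) = 1 := by simp [a, Matrix.one_apply]
lemma b_one : b ε (1 : Hsub ε) = 0 := by simp [b, Matrix.one_apply]

variable {ε}

lemma rho_mul_entries (h2 : (2:F) ≠ 0) (u v : Hsub ε) (g : Heis F) :
    rho ε (a ε (u * v)) (b ε (u * v)) g = rho ε (a ε u) (b ε u) (rho ε (a ε v) (b ε v) g) := by
  rw [rho_comp h2]
  have hv := mem_Hsub v.2
  have h1 : a ε (u * v) = a ε u * a ε v + ε * b ε u * b ε v := by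
    simp only [a, b, Subgroup.coe_mul, Units.val_mul, Matrix.mul_apply, Fin.sum_univ_two,
      hv.1, hv.2]
    ring
  have h2' : b ε (u * v) = a ε u * b ε v + b ε u * a ε v := by
    simp only [a, b, Subgroup.coe_mul, Units.val_mul, Matrix.mul_apply, Fin.sum_univ_two,
      hv.1, hv.2]
  rw [h1, h2']

def phi (h2 : (2:F) ≠ 0) : Hsub ε →* MulAut (Heis F) where
  toFun u :=
    { toFun := rho ε (a ε u) (b ε u)
      invFun := rho ε (a ε u⁻¹) (b ε u⁻¹)
      left_inv := fun g => by
        rw [← rho_mul_entries h2 u⁻¹ u g, inv_mul_cancel, a_one, b_one, rho_one]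
      right_inv := fun g => by
        rw [← rho_mul_entries h2 u u⁻¹ g, mul_inv_cancel, a_one, b_one, rho_one]
      map_mul' := rho_map_mul h2 ε _ _ }
  map_one' := by
    refine MulEquiv.ext fun g => ?_
    show rho ε (a ε 1) (b ε 1) g = g
    rw [a_one, b_one, rho_one]
  map_mul' u v := MulEquiv.ext fun g => rho_mul_entries h2 u v g

lemma phi_injective (h2 : (2:F) ≠ 0) : Function.Injective (phi (ε := ε) h2) := by
  intro u v h
  have h1 : rho ε (a ε u) (b ε u) (⟨1,0,0⟩ : Heis F) = rho ε (a ε v) (b ε v) ⟨1,0,0⟩ :=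
    DFunLike.congr_fun h (⟨1,0,0⟩ : Heis F)
  simp only [rho, gElt, mul_one, mul_zero, add_zero, Heis.mk.injEq] at h1
  obtain ⟨ha, hb, -⟩ := h1
  refine Subtype.ext (Units.ext ?_)
  have hu := mem_Hsub u.2
  have hv := mem_Hsub v.2
  rw [Matrix.eta_fin_two ((u : GL (Fin 2) F) : Matrix (Fin 2) (Fin 2) F),
    Matrix.eta_fin_two ((v : GL (Fin 2) F) : Matrix (Fin 2) (Fin 2) F), hu.1, hu.2, hv.1, hv.2]
  show !![a ε u, b ε u; ε * b ε u, a ε u] = !![a ε v, b ε v; ε * b ε v, a ε v]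
  rw [ha, hb]

end S0

/-- The set `M(ε) = {[[α,β],[εβ,α]] : (α,β) ≠ (0,0)}` is a subgroup of
`GL₂(F_q)`, and `M ↦ ρ(M)` is an injective group homomorphism from `M(ε)` to `Aut(G)`;
in particular each `ρ(M)` is a group automorphism of `G`. -/
theorem statement_0 {F : Type*} [Field F] [Fintype F]
    (hodd : Odd (Fintype.card F)) (ε : F) (hε : ¬IsSquare ε) :
    ∃ H : Subgroup (GL (Fin 2) F),
      ((fun u : GL (Fin 2) F => (u : Matrix (Fin 2) (Fin 2) F)) '' (H : Set (GL (Fin 2) F))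
          = {A : Matrix (Fin 2) (Fin 2) F |
              ∃ α β : F, (α, β) ≠ (0, 0) ∧ A = !![α, β; ε * β, α]}) ∧
      ∃ φ : H →* MulAut (Heis F),
        Function.Injective φ ∧
        ∀ u : H, ⇑(φ u) = rho ε (((u : GL (Fin 2) F) : Matrix (Fin 2) (Fin 2) F) 0 0)
            (((u : GL (Fin 2) F) : Matrix (Fin 2) (Fin 2) F) 0 1) := by
  have h2 : (2 : F) ≠ 0 := by
    intro h
    have hd : ringChar F ∣ 2 := ringChar.dvd (by exact_mod_cast h)
    rcases (Nat.dvd_prime Nat.prime_two).mp hd with h1 | h1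
    · exact CharP.ringChar_ne_one h1
    · have h3 := FiniteField.even_card_iff_char_two.mp h1
      have h4 := Nat.odd_iff.mp hodd
      omega
  have hdnz : ∀ α β : F, (α, β) ≠ (0, 0) → α ^ 2 - ε * β ^ 2 ≠ 0 := by
    intro α β hab h
    rcases eq_or_ne β 0 with hβ | hβ
    · subst hβ
      apply hab
      have hα : α = 0 := by
        have h0 : α ^ 2 = 0 := by linear_combination h
        exact pow_eq_zero_iff two_ne_zero |>.mp h0
      simp [hα]
    · refine hε ⟨α / β, ?_⟩
      rw [div_mul_div_comm, eq_div_iff (mul_ne_zero hβ hβ)]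
      linear_combination -h
  refine ⟨S0.Hsub ε, ?_, S0.phi h2, S0.phi_injective h2, fun u => rfl⟩
  ext A
  constructor
  · rintro ⟨u, hu, rfl⟩
    have hmem := S0.mem_Hsub hu
    have hdu : ((u : Matrix (Fin 2) (Fin 2) F)).det ≠ 0 :=
      ((Matrix.isUnit_iff_isUnit_det _).mp u.isUnit).ne_zero
    refine ⟨(u : Matrix (Fin 2) (Fin 2) F) 0 0, (u : Matrix (Fin 2) (Fin 2) F) 0 1, ?_, ?_⟩
    · intro heq
      rw [Prod.mk.injEq] at heq
      apply hdu
      rw [Matrix.det_fin_two, hmem.1, hmem.2, heq.1, heq.2]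
      ring
    · beta_reduce
      conv_lhs => rw [Matrix.eta_fin_two (u : Matrix (Fin 2) (Fin 2) F)]
      rw [hmem.1, hmem.2]
  · rintro ⟨α, β, hab, rfl⟩
    have hdet : (!![α, β; ε * β, α]).det ≠ 0 := by
      rw [Matrix.det_fin_two_of]
      intro h
      exact hdnz α β hab (by linear_combination h)
    have hdet' : IsUnit (!![α, β; ε * β, α]).det := isUnit_iff_ne_zero.mpr hdet
    refine ⟨⟨!![α, β; ε * β, α], (!![α, β; ε * β, α])⁻¹,
      Matrix.mul_nonsing_inv _ hdet', Matrix.nonsing_inv_mul _ hdet'⟩, ⟨?_, ?_⟩, rfl⟩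
    · show (!![α, β; ε * β, α]) 1 0 = ε * (!![α, β; ε * β, α]) 0 1
      simp
    · show (!![α, β; ε * β, α]) 1 1 = (!![α, β; ε * β, α]) 0 0
      simp
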